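/- arXiv:hep-th/9408086 — 2 statements merged into one kernel-verified Lean document; each statement's English description precedes it below -/
import Mathlib

section
/- If α_n = α_n(a,q) and β_n = β_n(a,q), elements of the field ℚ(a,q) of rational functions in two indeterminates, form a Bailey pair relative to a, then the sequences A_n(a,q) = a^n q^{n²} α_n(a^{−1}, q^{−1}) and B_n(a,q) = a^{−n} q^{−n²−n} β_n(a^{−1}, q^{−1}) (where the substitution a ↦ a^{−1}, q ↦ q^{−1} is the corresponding field automorphism of ℚ(a,q)) also form a Bailey pair relative to a. -/
/-- The finite q-Pochhammer symbol `(a;q)_n = ∏_{m=0}^{n-1} (1 - a q^m)`. -/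
noncomputable def qPoch {K : Type*} [Field K] (a q : K) (n : ℕ) : K :=
  ∏ m ∈ Finset.range n, (1 - a * q ^ m)

/-- `(α, β)` form a Bailey pair relative to `a`:
`β_n = ∑_{r=0}^{n} α_r / ((q;q)_{n-r} (aq;q)_{n+r})`. -/
def IsBaileyPair {K : Type*} [Field K] (a q : K) (α β : ℕ → K) : Prop :=
  ∀ n : ℕ, β n =
    ∑ r ∈ Finset.range (n + 1), α r / (qPoch q q (n - r) * qPoch (a * q) q (n + r))

/-- The field `ℚ(a,q)` of rational functions in two indeterminates over `ℚ`. -/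
abbrev RatFuncAQ : Type := FractionRing (MvPolynomial (Fin 2) ℚ)

/-- The indeterminate `a` in `ℚ(a,q)`. -/
noncomputable def aVar : RatFuncAQ :=
  algebraMap (MvPolynomial (Fin 2) ℚ) RatFuncAQ (MvPolynomial.X 0)

/-- The indeterminate `q` in `ℚ(a,q)`. -/
noncomputable def qVar : RatFuncAQ :=
  algebraMap (MvPolynomial (Fin 2) ℚ) RatFuncAQ (MvPolynomial.X 1)

open Finset

lemma gauss (m : ℕ) : 2 * (∑ j ∈ range m, j) + m = m ^ 2 := by
  induction m with
  | zero => simp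
  | succ k ih =>
      rw [sum_range_succ]
      have : (k+1)^2 = k^2 + 2*k + 1 := by ring
      rw [this]; linarith

lemma exp_id (n r : ℕ) (hr : r ≤ n) :
    ((n - r) + (n + r)) + ((∑ j ∈ range (n - r), j) + ∑ j ∈ range (n + r), j)
      = n ^ 2 + n + r ^ 2 := by
  obtain ⟨k, rfl⟩ : ∃ k, n = r + k := ⟨n - r, by omega⟩
  have hk : r + k - r = k := by omega
  rw [hk]
  have h1 := gauss k
  have h2 := gauss (r + k + r)
  have h3 : 2 * ((k + (r + k + r)) + ((∑ j ∈ range k, j) + ∑ j ∈ range (r + k + r), j))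
      = 2 * ((r + k) ^ 2 + (r + k) + r ^ 2) := by
    zify at h1 h2 ⊢
    linear_combination h1 + h2
  linarith

lemma qPoch_inv {K : Type*} [Field K] (x q : K) (hx : x ≠ 0) (hq : q ≠ 0) (m : ℕ) :
    qPoch x⁻¹ q⁻¹ m = ((-1 : K) ^ m * x ^ m * q ^ (∑ j ∈ Finset.range m, j))⁻¹ * qPoch x q m := by
  induction m with
  | zero => simp [qPoch]
  | succ k ih =>
      simp only [qPoch] at ih ⊢
      rw [Finset.prod_range_succ, Finset.prod_range_succ, Finset.sum_range_succ, ih]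
      simp only [inv_pow]
      field_simp
      ring

lemma map_qPoch {K : Type*} [Field K] (σ : K ≃+* K) (a q : K) (n : ℕ) :
    σ (qPoch a q n) = qPoch (σ a) (σ q) n := by
  simp [qPoch, map_prod]

lemma aVar_ne_zero : aVar ≠ 0 := by
  simp only [aVar, ne_eq, map_eq_zero_iff _ (IsFractionRing.injective (MvPolynomial (Fin 2) ℚ) RatFuncAQ)]
  exact MvPolynomial.X_ne_zero 0

lemma qVar_ne_zero : qVar ≠ 0 := by
  simp only [qVar, ne_eq, map_eq_zero_iff _ (IsFractionRing.injective (MvPolynomial (Fin 2) ℚ) RatFuncAQ)]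
  exact MvPolynomial.X_ne_zero 1

set_option maxHeartbeats 1000000 in
/-- Andrews' dual Bailey pair: if `(α, β)` is a Bailey pair relative to `a` in `ℚ(a,q)`, then
`A_n(a,q) = a^n q^{n²} α_n(a⁻¹, q⁻¹)` and `B_n(a,q) = a^{-n} q^{-n²-n} β_n(a⁻¹, q⁻¹)` form
another Bailey pair relative to `a`, where the substitution `a ↦ a⁻¹, q ↦ q⁻¹` is the
corresponding field automorphism `σ` of `ℚ(a,q)`. -/
theorem dual_bailey_pair (σ : RatFuncAQ ≃+* RatFuncAQ)
    (hσa : σ aVar = aVar⁻¹) (hσq : σ qVar = qVar⁻¹)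
    (α β : ℕ → RatFuncAQ) (h : IsBaileyPair aVar qVar α β) :
    IsBaileyPair aVar qVar
      (fun n => aVar ^ n * qVar ^ (n ^ 2) * σ (α n))
      (fun n => aVar ^ (-(n : ℤ)) * qVar ^ (-((n : ℤ) ^ 2) - (n : ℤ)) * σ (β n)) := by
  intro n
  have ha := aVar_ne_zero
  have hq := qVar_ne_zero
  have hβ := congrArg σ (h n)
  rw [map_sum] at hβ
  simp only [map_div₀, map_mul, map_qPoch, hσa, hσq] at hβ
  simp only
  rw [hβ, Finset.mul_sum]
  have e1 : aVar ^ (-(n : ℤ)) = (aVar ^ n)⁻¹ := by rw [zpow_neg, zpow_natCast]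
  have e2 : qVar ^ (-((n : ℤ) ^ 2) - (n : ℤ)) = (qVar ^ (n ^ 2 + n))⁻¹ := by
    rw [show (-((n : ℤ) ^ 2) - (n : ℤ)) = -(((n ^ 2 + n : ℕ) : ℤ)) by push_cast; ring,
      zpow_neg, zpow_natCast]
  rw [e1, e2]
  refine Finset.sum_congr rfl fun r hr => ?_
  have hrn : r ≤ n := Nat.lt_succ_iff.mp (Finset.mem_range.mp hr)
  rw [show aVar⁻¹ * qVar⁻¹ = (aVar * qVar)⁻¹ by rw [mul_inv],
    qPoch_inv qVar qVar hq hq, qPoch_inv (aVar * qVar) qVar (mul_ne_zero ha hq) hq]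
  set S1 := ∑ j ∈ Finset.range (n - r), j with hS1
  set S2 := ∑ j ∈ Finset.range (n + r), j with hS2
  set C1 : RatFuncAQ := (-1) ^ (n - r) * qVar ^ (n - r) * qVar ^ S1 with hC1
  set C2 : RatFuncAQ := (-1) ^ (n + r) * (aVar * qVar) ^ (n + r) * qVar ^ S2 with hC2
  set D1 : RatFuncAQ := qPoch qVar qVar (n - r) with hD1
  set D2 : RatFuncAQ := qPoch (aVar * qVar) qVar (n + r) with hD2
  have key : C1 * C2 = aVar ^ n * qVar ^ (n ^ 2 + n) * (aVar ^ r * qVar ^ (r ^ 2)) := by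
    have h1 : ((-1 : RatFuncAQ)) ^ (n - r) * (-1) ^ (n + r) = 1 := by
      rw [← pow_add, show (n - r) + (n + r) = 2 * n by omega, pow_mul, neg_one_sq, one_pow]
    have h2 : qVar ^ (n - r) * qVar ^ (n + r) * qVar ^ S1 * qVar ^ S2
        = qVar ^ (n ^ 2 + n + r ^ 2) := by
      have he := exp_id n r hrn
      rw [← hS1, ← hS2] at he
      rw [← pow_add, ← pow_add, ← pow_add, show n - r + (n + r) + S1 + S2
        = n ^ 2 + n + r ^ 2 from by linarith]
    have h3 : (aVar : RatFuncAQ) ^ (n + r) = aVar ^ n * aVar ^ r := by rw [pow_add]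
    have h4 : (qVar : RatFuncAQ) ^ (n ^ 2 + n + r ^ 2) = qVar ^ (n ^ 2 + n) * qVar ^ (r ^ 2) := by
      rw [pow_add]
    calc C1 * C2
        = ((-1) ^ (n - r) * (-1) ^ (n + r)) * aVar ^ (n + r)
          * (qVar ^ (n - r) * qVar ^ (n + r) * qVar ^ S1 * qVar ^ S2) := by
          rw [hC1, hC2, mul_pow]; ring
      _ = aVar ^ n * qVar ^ (n ^ 2 + n) * (aVar ^ r * qVar ^ (r ^ 2)) := by
          rw [h1, h2, h3, h4]; ring
  have hden : C1⁻¹ * D1 * (C2⁻¹ * D2) = (C1 * C2)⁻¹ * (D1 * D2) := by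
    rw [mul_inv]; ring
  rw [hden, div_eq_mul_inv, div_eq_mul_inv, mul_inv, inv_inv, key]
  have hx : (aVar ^ n * qVar ^ (n ^ 2 + n) : RatFuncAQ) ≠ 0 :=
    mul_ne_zero (pow_ne_zero _ ha) (pow_ne_zero _ hq)
  field_simp
end

section
/- (Bailey's lemma.) Let α = (α_n)_{n≥0} and β = (β_n)_{n≥0}, elements of ℚ(a,q), form a Bailey pair relative to a. Define α'_n = a^n q^{n²} α_n and β'_n = Σ_{r=0}^{n} (a^r q^{r²}/(q)_{n−r}) β_r. Then α' = (α'_n)_{n≥0} and β' = (β'_n)_{n≥0} also form a Bailey pair relative to a. -/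
variable {K : Type*} [Field K]

lemma qPoch_zero (a q : K) : qPoch a q 0 = 1 := by simp [qPoch]

lemma qPoch_succ (a q : K) (n : ℕ) :
    qPoch a q (n + 1) = qPoch a q n * (1 - a * q ^ n) := by
  simp [qPoch, Finset.prod_range_succ]

lemma qPoch_add (a q : K) (m n : ℕ) :
    qPoch a q (m + n) = qPoch a q m * qPoch (a * q ^ m) q n := by
  simp only [qPoch, Finset.prod_range_add]
  congr 1
  refine Finset.prod_congr rfl fun i _ => ?_
  ring_nf

lemma qPoch_ne_zero (a q : K) (n : ℕ) (h : ∀ j < n, (1 : K) - a * q ^ j ≠ 0) :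
    qPoch a q n ≠ 0 :=
  Finset.prod_ne_zero_iff.2 fun i hi => h i (Finset.mem_range.1 hi)

/-- Gaussian binomial via the q-Pascal recurrence. -/
noncomputable def qb (q : K) : ℕ → ℕ → K
  | 0, 0 => 1
  | 0, _ + 1 => 0
  | _ + 1, 0 => 1
  | m + 1, k + 1 => q ^ (m - k) * qb q m k + qb q m (k + 1)

lemma qb_zero_right (q : K) (m : ℕ) : qb q m 0 = 1 := by cases m <;> rfl

lemma qb_eq_zero (q : K) : ∀ m k : ℕ, m < k → qb q m k = 0
  | 0, _ + 1, _ => rfl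
  | m + 1, k + 1, h => by
    rw [qb, qb_eq_zero q m k (by omega), qb_eq_zero q m (k + 1) (by omega)]
    ring

lemma qb_diag (q : K) : ∀ m : ℕ, qb q m m = 1
  | 0 => rfl
  | m + 1 => by
    rw [qb, qb_eq_zero q m (m + 1) (by omega), qb_diag q m]
    simp

lemma qb_mul (q : K) : ∀ m k : ℕ, k ≤ m →
    qb q m k * (qPoch q q k * qPoch q q (m - k)) = qPoch q q m
  | 0, 0, _ => by simp [qb, qPoch_zero]
  | m + 1, 0, _ => by simp [qb_zero_right, qPoch_zero]
  | m + 1, k + 1, h => by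
    rcases Nat.lt_or_ge k m with hk | hk
    · obtain ⟨j, rfl⟩ : ∃ j, m = k + 1 + j := ⟨m - (k + 1), by omega⟩
      have h1 := qb_mul q (k + 1 + j) k (by omega)
      have h2 := qb_mul q (k + 1 + j) (k + 1) (by omega)
      rw [show k + 1 + j - k = j + 1 from by omega] at h1
      rw [show k + 1 + j - (k + 1) = j from by omega] at h2
      rw [qb, show k + 1 + j - k = j + 1 from by omega,
        show k + 1 + j + 1 - (k + 1) = j + 1 from by omega,
        qPoch_succ q q (k + 1 + j), qPoch_succ q q k, qPoch_succ q q j]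
      rw [qPoch_succ q q k] at h2
      rw [qPoch_succ q q j] at h1
      have ek : (q : K) ^ (k + 1 + j) = q ^ k * q * q ^ j := by
        rw [pow_add, pow_add, pow_one]
      rw [ek]
      linear_combination (q ^ (j + 1) * (1 - q * q ^ k)) * h1 + (1 - q * q ^ j) * h2
    · have hk' : k = m := by omega
      subst hk'
      rw [qb, qb_eq_zero q k (k + 1) (by omega), qb_diag q k]
      simp [qPoch_zero]


lemma qb_sum (q : K) : ∀ m : ℕ, ∀ A : K,
    ∑ k ∈ Finset.range (m + 1),
      qb q m k * q ^ (k * (k - 1)) * A ^ k * qPoch (A * q ^ k) q (m - k) = 1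
  | 0, A => by simp [qb, qPoch_zero]
  | m + 1, A => by
    rw [Finset.sum_range_succ']
    have hsplit : ∀ j ∈ Finset.range (m + 1),
        qb q (m+1) (j+1) * q ^ ((j+1) * (j+1-1)) * A ^ (j+1) * qPoch (A * q ^ (j+1)) q (m+1-(j+1))
        = (A * q ^ m) * (qb q m j * q ^ (j * (j-1)) * (A*q) ^ j * qPoch ((A*q) * q ^ j) q (m - j))
          + qb q m (j+1) * q ^ ((j+1) * j) * A ^ (j+1) * qPoch (A * q ^ (j+1)) q (m - j) := by
      intro j hj
      rw [Finset.mem_range] at hj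
      obtain ⟨t, rfl⟩ : ∃ t, m = j + t := ⟨m - j, by omega⟩
      rw [show j + t + 1 - (j + 1) = t from by omega, show j + 1 - 1 = j from rfl,
        show j + t - j = t from by omega, qb, show j + t - j = t from by omega]
      have e1 : (A*q) * q ^ j = A * q ^ (j+1) := by rw [pow_succ]; ring
      rw [e1]
      have hpow : (q:K) ^ t * q ^ ((j+1)*j) = q ^ (j+t) * q ^ (j*(j-1)) * q ^ j := by
        rw [← pow_add, ← pow_add, ← pow_add]
        congr 1
        cases j with
        | zero => simp
        | succ i => simp only [Nat.succ_sub_one]; ring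
      linear_combination (qb q (j+t) j * A ^ (j+1) * qPoch (A * q ^ (j+1)) q t) * hpow
    rw [Finset.sum_congr rfl hsplit, Finset.sum_add_distrib, ← Finset.mul_sum,
      qb_sum q m (A*q)]
    have hT0 : qb q (m+1) 0 * q ^ (0 * (0-1)) * A ^ 0 * qPoch (A * q ^ 0) q (m+1-0)
        = qb q m 0 * q ^ (0 * (0-1)) * A ^ 0 * qPoch (A * q ^ 0) q (m+1-0) := by
      rw [qb_zero_right, qb_zero_right]
    rw [hT0]
    have hstep : (∑ j ∈ Finset.range (m+1),
          qb q m (j+1) * q ^ ((j+1) * j) * A ^ (j+1) * qPoch (A * q ^ (j+1)) q (m - j))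
        + qb q m 0 * q ^ (0 * (0-1)) * A ^ 0 * qPoch (A * q ^ 0) q (m+1-0)
        = ∑ k ∈ Finset.range (m+2),
            qb q m k * q ^ (k * (k-1)) * A ^ k * qPoch (A * q ^ k) q (m+1-k) := by
      rw [Finset.sum_range_succ' (fun k =>
        qb q m k * q ^ (k * (k-1)) * A ^ k * qPoch (A * q ^ k) q (m+1-k)) (m+1)]
      congr 1
      refine Finset.sum_congr rfl fun j hj => ?_
      rw [show j + 1 - 1 = j from rfl, show m + 1 - (j+1) = m - j from by omega]
    rw [mul_one, add_assoc, hstep, Finset.sum_range_succ, qb_eq_zero q m (m+1) (by omega)]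
    have hfac : ∀ k ∈ Finset.range (m+1),
        qb q m k * q ^ (k * (k-1)) * A ^ k * qPoch (A * q ^ k) q (m+1-k)
        = (qb q m k * q ^ (k * (k-1)) * A ^ k * qPoch (A * q ^ k) q (m-k)) * (1 - A * q ^ m) := by
      intro k hk
      rw [Finset.mem_range] at hk
      rw [show m + 1 - k = (m - k) + 1 from by omega, qPoch_succ]
      have : A * q ^ k * q ^ (m - k) = A * q ^ m := by
        rw [mul_assoc, ← pow_add, show k + (m - k) = m from by omega]
      rw [this]
      ring
    rw [Finset.sum_congr rfl hfac, ← Finset.sum_mul, qb_sum q m A]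
    ring

lemma keyFrac (q A : K) (hq : ∀ n : ℕ, qPoch q q n ≠ 0) (hA : ∀ n : ℕ, qPoch A q n ≠ 0)
    (m : ℕ) :
    ∑ k ∈ Finset.range (m + 1),
      A ^ k * q ^ (k * (k - 1)) / (qPoch q q k * qPoch q q (m - k) * qPoch A q k)
      = 1 / (qPoch q q m * qPoch A q m) := by
  rw [eq_div_iff (mul_ne_zero (hq m) (hA m)), Finset.sum_mul, ← qb_sum q m A]
  refine Finset.sum_congr rfl fun k hk => ?_
  rw [Finset.mem_range] at hk
  have hkm : k ≤ m := by omega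
  have e1 : qPoch q q m = qb q m k * (qPoch q q k * qPoch q q (m - k)) := (qb_mul q m k hkm).symm
  have e2 : qPoch A q m = qPoch A q k * qPoch (A * q ^ k) q (m - k) := by
    rw [← qPoch_add, Nat.add_sub_cancel' hkm]
  rw [e1, e2, div_mul_eq_mul_div, div_eq_iff
    (mul_ne_zero (mul_ne_zero (hq k) (hq (m - k))) (hA k))]
  ring

lemma one_sub_q_ne (i : ℕ) : (1 : RatFuncAQ) - qVar * qVar ^ i ≠ 0 := by
  intro hcon
  have h0 : algebraMap (MvPolynomial (Fin 2) ℚ) RatFuncAQ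
      (1 - MvPolynomial.X 1 * MvPolynomial.X 1 ^ i) = algebraMap _ RatFuncAQ 0 := by
    rw [map_sub, map_one, map_mul, map_pow, map_zero]
    exact hcon
  have h1 := IsFractionRing.injective (MvPolynomial (Fin 2) ℚ) RatFuncAQ h0
  have h2 := congrArg (MvPolynomial.eval (fun _ => (0 : ℚ))) h1
  simp at h2

lemma one_sub_aq_ne (e : ℕ) : (1 : RatFuncAQ) - aVar * qVar ^ e ≠ 0 := by
  intro hcon
  have h0 : algebraMap (MvPolynomial (Fin 2) ℚ) RatFuncAQ
      (1 - MvPolynomial.X 0 * MvPolynomial.X 1 ^ e) = algebraMap _ RatFuncAQ 0 := by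
    rw [map_sub, map_one, map_mul, map_pow, map_zero]
    exact hcon
  have h1 := IsFractionRing.injective (MvPolynomial (Fin 2) ℚ) RatFuncAQ h0
  have h2 := congrArg (MvPolynomial.eval (fun _ => (0 : ℚ))) h1
  simp at h2

lemma qPoch_q_ne (n : ℕ) : qPoch qVar qVar n ≠ 0 :=
  qPoch_ne_zero _ _ _ fun j _ => one_sub_q_ne j

lemma qPoch_aq_ne (c n : ℕ) : qPoch (aVar * qVar ^ c) qVar n ≠ 0 :=
  qPoch_ne_zero _ _ _ fun j _ => by
    rw [mul_assoc, ← pow_add]; exact one_sub_aq_ne (c + j)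

lemma qPoch_aq1_ne (n : ℕ) : qPoch (aVar * qVar) qVar n ≠ 0 := by
  have := qPoch_aq_ne 1 n
  rwa [pow_one] at this

lemma key (n s : ℕ) (hs : s ≤ n) :
    ∑ r ∈ Finset.Icc s n, aVar ^ r * qVar ^ (r ^ 2) /
      (qPoch qVar qVar (n - r) * qPoch qVar qVar (r - s) * qPoch (aVar * qVar) qVar (r + s))
    = aVar ^ s * qVar ^ (s ^ 2) /
      (qPoch qVar qVar (n - s) * qPoch (aVar * qVar) qVar (n + s)) := by
  set A : RatFuncAQ := aVar * qVar ^ (2 * s + 1) with hA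
  set m : ℕ := n - s with hm
  rw [← Finset.Ico_add_one_right_eq_Icc, Finset.sum_Ico_eq_sum_range,
    show n + 1 - s = m + 1 from by omega]
  have hAq : (aVar * qVar) * qVar ^ (2 * s) = A := by
    rw [hA, pow_add, pow_one]; ring
  have hterm : ∀ k ∈ Finset.range (m + 1),
      aVar ^ (s + k) * qVar ^ ((s + k) ^ 2) /
        (qPoch qVar qVar (n - (s + k)) * qPoch qVar qVar (s + k - s) *
          qPoch (aVar * qVar) qVar (s + k + s))
      = (aVar ^ s * qVar ^ (s ^ 2) / qPoch (aVar * qVar) qVar (2 * s)) *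
        (A ^ k * qVar ^ (k * (k - 1)) /
          (qPoch qVar qVar k * qPoch qVar qVar (m - k) * qPoch A qVar k)) := by
    intro k hk
    rw [show n - (s + k) = m - k from by omega, show s + k - s = k from by omega,
      show s + k + s = 2 * s + k from by omega, qPoch_add, hAq]
    have hnum : aVar ^ (s + k) * qVar ^ ((s + k) ^ 2)
        = aVar ^ s * qVar ^ (s ^ 2) * (A ^ k * qVar ^ (k * (k - 1))) := by
      have he : (s + k) ^ 2 = s ^ 2 + ((2 * s + 1) * k + k * (k - 1)) := by
        cases k with
        | zero => simp
        | succ i => simp only [Nat.succ_sub_one]; ring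
      rw [he, pow_add aVar, pow_add, pow_add, hA, mul_pow, ← pow_mul]
      ring
    rw [hnum, div_mul_div_comm]
    congr 1
    ring
  rw [Finset.sum_congr rfl hterm, ← Finset.mul_sum,
    keyFrac qVar A qPoch_q_ne (fun t => hA ▸ qPoch_aq_ne (2 * s + 1) t) m,
    show n + s = 2 * s + m from by omega, qPoch_add, hAq]
  rw [div_mul_div_comm, mul_one]
  congr 1
  ring

/-- Bailey's lemma: if `(α, β)` is a Bailey pair relative to `a` in `ℚ(a,q)`, then so is
`(α', β')` with `α'_n = a^n q^{n²} α_n` and `β'_n = ∑_{r=0}^n (a^r q^{r²}/(q;q)_{n-r}) β_r`. -/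
theorem bailey_chain (α β : ℕ → RatFuncAQ) (h : IsBaileyPair aVar qVar α β) :
    IsBaileyPair aVar qVar
      (fun n => aVar ^ n * qVar ^ (n ^ 2) * α n)
      (fun n => ∑ r ∈ Finset.range (n + 1),
        aVar ^ r * qVar ^ (r ^ 2) / qPoch qVar qVar (n - r) * β r) := by
  intro n
  simp only []
  calc
    ∑ r ∈ Finset.range (n + 1),
        aVar ^ r * qVar ^ (r ^ 2) / qPoch qVar qVar (n - r) * β r
      = ∑ r ∈ Finset.range (n + 1), ∑ s ∈ Finset.range (r + 1),
          (aVar ^ r * qVar ^ (r ^ 2) / qPoch qVar qVar (n - r)) *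
            (α s / (qPoch qVar qVar (r - s) * qPoch (aVar * qVar) qVar (r + s))) := by
        refine Finset.sum_congr rfl fun r _ => ?_
        rw [h r, Finset.mul_sum]
    _ = ∑ s ∈ Finset.range (n + 1), ∑ r ∈ Finset.Icc s n,
          α s * (aVar ^ r * qVar ^ (r ^ 2) /
            (qPoch qVar qVar (n - r) * qPoch qVar qVar (r - s) *
              qPoch (aVar * qVar) qVar (r + s))) := by
        rw [show (Finset.range : ℕ → Finset ℕ) = Finset.Ico 0 from funext fun k => Finset.range_eq_Ico k, ← Finset.sum_Ico_Ico_comm 0 (n + 1) (fun s r =>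
          (aVar ^ r * qVar ^ (r ^ 2) / qPoch qVar qVar (n - r)) *
            (α s / (qPoch qVar qVar (r - s) * qPoch (aVar * qVar) qVar (r + s))))]
        refine Finset.sum_congr rfl fun s _ => ?_
        rw [Finset.Ico_add_one_right_eq_Icc]
        refine Finset.sum_congr rfl fun r _ => ?_
        rw [div_mul_div_comm]
        ring
    _ = ∑ s ∈ Finset.range (n + 1),
          α s * (aVar ^ s * qVar ^ (s ^ 2) /
            (qPoch qVar qVar (n - s) * qPoch (aVar * qVar) qVar (n + s))) := by
        refine Finset.sum_congr rfl fun s hs => ?_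
        rw [Finset.mem_range] at hs
        rw [← Finset.mul_sum, key n s (by omega)]
    _ = ∑ r ∈ Finset.range (n + 1),
          aVar ^ r * qVar ^ (r ^ 2) * α r /
            (qPoch qVar qVar (n - r) * qPoch (aVar * qVar) qVar (n + r)) := by
        refine Finset.sum_congr rfl fun r _ => ?_
        ring
end
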